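/- arXiv:0803.3997 — 3 statements merged into one kernel-verified Lean document; each statement's English description precedes it below -/
import Mathlib

section
/- Let d be a positive integer and M, r positive real numbers. Then there exists ε > 0 such that for every polynomial A = a₀ z^d + a₁ z^{d−1} + ⋯ + a_d with coefficients a_i holomorphic on the closed ball B_n(r) ⊂ C^n satisfying sup_{x∈B_n(r)} |a_i(x)| < M, and for all holomorphic functions α, c on B_n(r) with sup |α| < M and sup |c| < ε such that A(x, α(x)) = c(x)·(∂A/∂z)(x, α(x))² for all x ∈ B_n(r), there exists a holomorphic function b on B_n(r) with A(x, b(x)) = 0 for all x ∈ B_n(r) and sup_{x∈B_n(r)} |b(x) − α(x)| ≤ 2 sup_{x∈B_n(r)} |c(x)·(∂A/∂z)(x, α(x))|. -/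
/-!
Put `b = α + c·A'(α)·u`. Taylor expansion of `A` at `α`, together with `A(α) = c·A'(α)²`, gives
`A(b) = c·A'(α)²·(1 + u + c·S(u))`, where `S` is a polynomial in `u` whose coefficients are
polynomials in the `aᵢ`, `α`, `c`; so `S` and its derivative are bounded uniformly on a compact
set of parameters. For `‖c‖` small, `u ↦ -1 - c·S(u)` is a contraction of the disc
`‖u + 1‖ ≤ 1`, whose fixed point `u(x)` satisfies `‖u(x)‖ ≤ 2`. By uniqueness of that fixed
point and the implicit function theorem, `u` is holomorphic in `x`.
-/

open Filter Topology Metric NNReal Finset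

section TaylorExpansion

variable {R : Type*} [CommRing R] {d : ℕ}

-- `a 0` is the leading coefficient, as in `A = a₀ z^d + ⋯ + a_d`.
def polyEval (a : Fin (d + 1) → R) (z : R) : R := ∑ i : Fin (d + 1), a i * z ^ (d - (i : ℕ))

def polyDeriv (a : Fin (d + 1) → R) (z : R) : R :=
  ∑ i : Fin (d + 1), ((d - (i : ℕ) : ℕ) : R) * a i * z ^ (d - (i : ℕ) - 1)

def taylorCoeff (a : Fin (d + 1) → R) (z : R) (k : ℕ) : R :=
  ∑ i : Fin (d + 1), a i * ((d - (i : ℕ)).choose k : R) * z ^ (d - (i : ℕ) - k)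

def taylorTail (a : Fin (d + 1) → R) (z t u : R) : R :=
  ∑ j ∈ range d, taylorCoeff a z (j + 2) * t ^ j * u ^ (j + 2)

theorem add_pow_eq_sum_range {z s : R} {m N : ℕ} (h : m < N) :
    (z + s) ^ m = ∑ k ∈ range N, (m.choose k : R) * z ^ (m - k) * s ^ k := by
  rw [add_comm, add_pow, sum_subset (range_subset_range.2 h)]
  · exact sum_congr rfl fun k _ => by ring
  · intro k _ hk
    rw [Nat.choose_eq_zero_of_lt (by simpa using hk)]
    simp

theorem polyEval_add {N : ℕ} (hN : d < N) (a : Fin (d + 1) → R) (z s : R) :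
    polyEval a (z + s) = ∑ k ∈ range N, taylorCoeff a z k * s ^ k := by
  simp only [polyEval, taylorCoeff, sum_mul]
  rw [sum_comm]
  refine sum_congr rfl fun i _ => ?_
  rw [add_pow_eq_sum_range (by omega : d - (i : ℕ) < N), mul_sum]
  exact sum_congr rfl fun k _ => by ring

theorem taylorCoeff_zero (a : Fin (d + 1) → R) (z : R) : taylorCoeff a z 0 = polyEval a z := by
  simp [taylorCoeff, polyEval]

theorem taylorCoeff_one (a : Fin (d + 1) → R) (z : R) : taylorCoeff a z 1 = polyDeriv a z :=
  sum_congr rfl fun i _ => by rw [Nat.choose_one_right]; ring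

theorem polyEval_add_mul (a : Fin (d + 1) → R) (z t u : R) :
    polyEval a (z + t * u) =
      polyEval a z + polyDeriv a z * (t * u) + t ^ 2 * taylorTail a z t u := by
  rw [polyEval_add (by omega : d < d + 2), sum_range_succ', sum_range_succ', taylorTail, mul_sum,
    taylorCoeff_zero, taylorCoeff_one]
  have : ∀ j ∈ range d, taylorCoeff a z (j + 1 + 1) * (t * u) ^ (j + 1 + 1) =
      t ^ 2 * (taylorCoeff a z (j + 2) * t ^ j * u ^ (j + 2)) := fun j _ => by ring
  rw [sum_congr rfl this]
  ring

theorem polyEval_add_mul_of_eq {a : Fin (d + 1) → R} {z C : R}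
    (h : polyEval a z = C * polyDeriv a z ^ 2) (u : R) :
    polyEval a (z + C * polyDeriv a z * u) =
      C * polyDeriv a z ^ 2 * (1 + u + C * taylorTail a z (C * polyDeriv a z) u) := by
  rw [polyEval_add_mul, h]
  ring

end TaylorExpansion

section Smoothness

variable {𝕜 E : Type*} [NontriviallyNormedField 𝕜] [NormedAddCommGroup E] [NormedSpace 𝕜 E]
  {d : ℕ} {n : WithTop ℕ∞} {s : Set E}

@[fun_prop]
theorem ContDiff.polyDeriv {a : E → Fin (d + 1) → 𝕜} {z : E → 𝕜} (ha : ContDiff 𝕜 n a)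
    (hz : ContDiff 𝕜 n z) : ContDiff 𝕜 n fun x => polyDeriv (a x) (z x) := by
  have := contDiff_pi.1 ha
  unfold _root_.polyDeriv
  fun_prop

@[fun_prop]
theorem ContDiff.taylorTail {a : E → Fin (d + 1) → 𝕜} {z t u : E → 𝕜} (ha : ContDiff 𝕜 n a)
    (hz : ContDiff 𝕜 n z) (ht : ContDiff 𝕜 n t) (hu : ContDiff 𝕜 n u) :
    ContDiff 𝕜 n fun x => taylorTail (a x) (z x) (t x) (u x) := by
  have := contDiff_pi.1 ha
  unfold _root_.taylorTail taylorCoeff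
  fun_prop

theorem DifferentiableOn.polyDeriv {a : E → Fin (d + 1) → 𝕜} {z : E → 𝕜}
    (ha : ∀ i, DifferentiableOn 𝕜 (fun x => a x i) s) (hz : DifferentiableOn 𝕜 z s) :
    DifferentiableOn 𝕜 (fun x => polyDeriv (a x) (z x)) s := by
  unfold _root_.polyDeriv
  fun_prop

end Smoothness

theorem ContDiff.exists_bound_lipschitzOnWith_closedBall {E F : Type*}
    [NormedAddCommGroup E] [NormedSpace ℝ E] [ProperSpace E]
    [NormedAddCommGroup F] [NormedSpace ℝ F] {f : E → F} (hf : ContDiff ℝ 1 f) (x : E) (R : ℝ) :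
    ∃ L : ℝ≥0, (∀ y ∈ closedBall x R, ‖f y‖ ≤ L) ∧ LipschitzOnWith L f (closedBall x R) := by
  obtain ⟨L₀, hL₀⟩ :=
    (isCompact_closedBall x R).exists_bound_of_continuousOn hf.continuous.continuousOn
  obtain ⟨L₁, hL₁⟩ := (isCompact_closedBall x R).exists_bound_of_continuousOn
    (hf.continuous_fderiv one_ne_zero).continuousOn
  refine ⟨(max L₀ L₁).toNNReal, fun y hy => ?_, ?_⟩
  · exact (hL₀ y hy).trans ((le_max_left _ _).trans (Real.le_coe_toNNReal _))
  · refine (convex_closedBall x R).lipschitzOnWith_of_nnnorm_fderiv_le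
      (fun y _ => hf.differentiable one_ne_zero y) fun y hy => ?_
    rw [← NNReal.coe_le_coe, coe_nnnorm]
    exact (hL₁ y hy).trans ((le_max_right _ _).trans (Real.le_coe_toNNReal _))

theorem IsCompact.le_biSup_of_continuousOn {X : Type*} [TopologicalSpace X] {s : Set X}
    (hs : IsCompact s) {f : X → ℝ} (hf : ContinuousOn f s) {x : X} (hx : x ∈ s) :
    f x ≤ ⨆ y ∈ s, f y := by
  refine le_ciSup₂ (f := fun y (_ : y ∈ s) => f y) ((hs.bddAbove_image hf).mono ?_) x hx
  rintro _ ⟨_, ⟨y, rfl⟩, hy, rfl⟩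
  exact ⟨y, hy, rfl⟩

theorem LipschitzOnWith.eq_of_add_eq_add {E : Type*} [NormedAddCommGroup E] {h : E → E}
    {s : Set E} {K : ℝ≥0} (hK : K < 1) (hh : LipschitzOnWith K h s) {u v : E} (hu : u ∈ s)
    (hv : v ∈ s) (huv : u + h u = v + h v) : u = v := by
  have hle : ‖u - v‖ ≤ K * ‖u - v‖ :=
    calc ‖u - v‖ = ‖h v - h u‖ := by
          rw [(sub_eq_sub_iff_add_eq_add.mpr (huv.trans (add_comm _ _)) : u - v = h v - h u)]
    _ ≤ K * ‖v - u‖ := by simpa only [dist_eq_norm] using hh.dist_le_mul v hv u hu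
    _ = K * ‖u - v‖ := by rw [norm_sub_rev]
  have hK' : (K : ℝ) < 1 := hK
  have : ‖u - v‖ ≤ 0 := by nlinarith [norm_nonneg (u - v)]
  rwa [norm_le_zero_iff, sub_eq_zero] at this

theorem exists_add_eq_of_lipschitzOnWith {E : Type*} [NormedAddCommGroup E] [CompleteSpace E]
    {h : E → E} {a : E} {ρ δ : ℝ} {K : ℝ≥0} (hK : K < 1)
    (hh : LipschitzOnWith K h (closedBall a ρ)) (hδ : 0 ≤ δ) (hδρ : δ ≤ ρ)
    (hbound : ∀ u ∈ closedBall a ρ, ‖h u‖ ≤ δ) :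
    ∃ u, ‖u - a‖ ≤ δ ∧ u + h u = a := by
  have hmaps : Set.MapsTo (fun u => a - h u) (closedBall a ρ) (closedBall a ρ) := fun u hu => by
    simpa [dist_eq_norm] using (hbound u hu).trans hδρ
  have hlip : LipschitzOnWith K (fun u => a - h u) (closedBall a ρ) :=
    LipschitzOnWith.of_dist_le_mul fun u hu v hv => by
      rw [dist_sub_left]; exact hh.dist_le_mul u hu v hv
  have hcontr : ContractingWith K (hmaps.restrict _ _ _) := ⟨hK, hlip.mapsToRestrict hmaps⟩
  obtain ⟨u, hu, hfix, -⟩ := hcontr.exists_fixedPoint'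
    isClosed_closedBall.isComplete hmaps (mem_closedBall_self (hδ.trans hδρ)) (edist_ne_top _ _)
  have hfix : u = a - h u := hfix.symm
  refine ⟨u, ?_, eq_sub_iff_add_eq.mp hfix⟩
  rw [hfix, sub_sub_cancel_left, norm_neg]
  exact hbound u hu

theorem ContinuousLinearMap.isInvertible_of_apply_one_ne_zero {𝕜 : Type*}
    [NontriviallyNormedField 𝕜] {f : 𝕜 →L[𝕜] 𝕜} (hf : f 1 ≠ 0) : f.IsInvertible := by
  refine .of_inverse (g := (f 1)⁻¹ • ContinuousLinearMap.id 𝕜 𝕜) ?_ ?_ <;>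
  · ext
    simp [smul_eq_mul, inv_mul_cancel₀ hf]

theorem differentiableOn_of_unique_zero {𝕜 X E : Type*} [RCLike 𝕜]
    [NormedAddCommGroup X] [NormedSpace 𝕜 X] [NormedAddCommGroup E] [NormedSpace 𝕜 E]
    [CompleteSpace E] {G : E × 𝕜 → 𝕜} {Y : X → E} {U : X → 𝕜} {s : Set X} {V : Set 𝕜}
    (hG : ContDiff 𝕜 1 G) (hY : DifferentiableOn 𝕜 Y s) (hV : IsOpen V) (hUV : ∀ x ∈ s, U x ∈ V)
    (hzero : ∀ x ∈ s, G (Y x, U x) = 0)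
    (huniq : ∀ x ∈ s, ∀ v ∈ V, G (Y x, v) = 0 → v = U x)
    (hderiv : ∀ x ∈ s, deriv (fun v => G (Y x, v)) (U x) ≠ 0) :
    DifferentiableOn 𝕜 U s := by
  intro x hx
  have hG' : HasStrictFDerivAt G (fderiv 𝕜 G (Y x, U x)) (Y x, U x) :=
    hG.contDiffAt.hasStrictFDerivAt one_ne_zero
  have hpartial : (fderiv 𝕜 G (Y x, U x) ∘L .inr 𝕜 E 𝕜) 1 = deriv (fun v => G (Y x, v)) (U x) :=
    ((hG'.hasFDerivAt.comp (U x) (hasFDerivAt_prodMk_right (Y x) (U x))).hasDerivAt.deriv).symm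
  have hinv := ContinuousLinearMap.isInvertible_of_apply_one_ne_zero (hpartial ▸ hderiv x hx)
  set ψ := hG'.implicitFunctionOfProdDomain hinv
  have hψ : ∀ᶠ x' in 𝓝[s] x, G (Y x', ψ (Y x')) = 0 ∧ ψ (Y x') ∈ V := by
    have hYx := (hY x hx).continuousWithinAt.tendsto
    refine hYx.eventually (p := fun y => G (y, ψ y) = 0 ∧ ψ y ∈ V) ?_
    filter_upwards [hG'.eventually_apply_implicitFunctionOfProdDomain hinv,
      hG'.tendsto_implicitFunctionOfProdDomain hinv (hV.mem_nhds (hUV x hx))] with y hy hyV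
    exact ⟨hy.trans (hzero x hx), hyV⟩
  have hUψ : U =ᶠ[𝓝[s] x] ψ ∘ Y := by
    filter_upwards [hψ, self_mem_nhdsWithin] with x' hx' hx's
    exact (huniq x' hx's _ hx'.2 hx'.1).symm
  have hψ' : DifferentiableAt 𝕜 ψ (Y x) :=
    (hG'.hasStrictFDerivAt_implicitFunctionOfProdDomain hinv).differentiableAt
  exact (hψ'.comp_differentiableWithinAt x (hY x hx)).congr_of_eventuallyEq hUψ
    (hUψ.eq_of_nhdsWithin hx)

section SmallPerturbation

variable {W : Type*} [NormedAddCommGroup W] {F : W × ℂ → ℂ} {L : ℝ≥0} {R : ℝ} {w : W} {C : ℂ}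

theorem prodMk_mem_closedBall_of_mem_closedBall_neg_one (hR : 2 ≤ R) (hw : ‖w‖ ≤ R) {u : ℂ}
    (hu : u ∈ closedBall (-1 : ℂ) 1) : (w, u) ∈ closedBall (0 : W × ℂ) R := by
  rw [mem_closedBall_zero_iff, Prod.norm_mk]
  refine max_le hw (le_trans ?_ hR)
  simpa [one_add_one_eq_two] using norm_le_of_mem_closedBall hu

theorem lipschitzOnWith_const_mul_slice (hF : LipschitzOnWith L F (closedBall 0 R)) (hR : 2 ≤ R)
    (hw : ‖w‖ ≤ R) (C : ℂ) :
    LipschitzOnWith (‖C‖₊ * L) (fun u => C * F (w, u)) (closedBall (-1) 1) :=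
  LipschitzOnWith.of_dist_le_mul fun u hu v hv => by
    have := hF.dist_le_mul _ (prodMk_mem_closedBall_of_mem_closedBall_neg_one hR hw hu) _
      (prodMk_mem_closedBall_of_mem_closedBall_neg_one hR hw hv)
    rw [Prod.dist_eq, dist_self, max_eq_right dist_nonneg] at this
    rw [dist_eq_norm, ← mul_sub, norm_mul, ← dist_eq_norm, NNReal.coe_mul, coe_nnnorm, mul_assoc]
    gcongr

theorem nnnorm_mul_lt_one (hC : ‖C‖ * L ≤ 1 / 2) : ‖C‖₊ * L < 1 := by
  rw [← NNReal.coe_lt_coe, NNReal.coe_mul, coe_nnnorm, NNReal.coe_one]; linarith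

theorem exists_one_add_add_mul_eq_zero (hFb : ∀ q ∈ closedBall 0 R, ‖F q‖ ≤ L)
    (hF : LipschitzOnWith L F (closedBall 0 R)) (hR : 2 ≤ R) (hw : ‖w‖ ≤ R)
    (hC : ‖C‖ * L ≤ 1 / 2) : ∃ u, ‖u + 1‖ ≤ 1 / 2 ∧ 1 + u + C * F (w, u) = 0 := by
  obtain ⟨u, hu, hu0⟩ := exists_add_eq_of_lipschitzOnWith (nnnorm_mul_lt_one hC)
    (lipschitzOnWith_const_mul_slice hF hR hw C) (δ := 1 / 2) (by norm_num) (by norm_num)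
    fun u hu => by
      rw [norm_mul]
      exact (mul_le_mul_of_nonneg_left
        (hFb _ (prodMk_mem_closedBall_of_mem_closedBall_neg_one hR hw hu)) (norm_nonneg C)).trans hC
  refine ⟨u, by simpa using hu, ?_⟩
  linear_combination hu0

theorem eq_of_one_add_add_mul_eq_zero (hF : LipschitzOnWith L F (closedBall 0 R)) (hR : 2 ≤ R)
    (hw : ‖w‖ ≤ R) (hC : ‖C‖ * L ≤ 1 / 2) {u v : ℂ} (hu : u ∈ closedBall (-1) 1)
    (hv : v ∈ closedBall (-1) 1) (hu0 : 1 + u + C * F (w, u) = 0)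
    (hv0 : 1 + v + C * F (w, v) = 0) : u = v :=
  (lipschitzOnWith_const_mul_slice hF hR hw C).eq_of_add_eq_add (nnnorm_mul_lt_one hC) hu hv
    (by linear_combination hu0 - hv0)

theorem deriv_one_add_add_mul_ne_zero (hF : LipschitzOnWith L F (closedBall 0 R)) (hR : 2 ≤ R)
    (hw : ‖w‖ ≤ R) (hC : ‖C‖ * L ≤ 1 / 2) {u : ℂ} (hu : u ∈ ball (-1) 1)
    (hFu : DifferentiableAt ℂ (fun v => F (w, v)) u) :
    deriv (fun v => 1 + v + C * F (w, v)) u ≠ 0 := by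
  have hsmall : ‖deriv (fun v => C * F (w, v)) u‖ < 1 :=
    (norm_deriv_le_of_lipschitzOn (closedBall_mem_nhds_of_mem hu)
      (lipschitzOnWith_const_mul_slice hF hR hw C)).trans_lt (nnnorm_mul_lt_one hC)
  have hderiv : HasDerivAt (fun v => 1 + v + C * F (w, v))
      (1 + deriv (fun v => C * F (w, v)) u) u :=
    ((hasDerivAt_id u).const_add 1).add (hFu.const_mul C).hasDerivAt
  rw [hderiv.deriv]
  intro h
  rw [eq_neg_of_add_eq_zero_right h, norm_neg, norm_one] at hsmall
  exact lt_irrefl _ hsmall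

end SmallPerturbation

theorem exists_differentiableOn_one_add_add_mul_eq_zero {X W : Type*} [NormedAddCommGroup X]
    [NormedSpace ℂ X] [NormedAddCommGroup W] [NormedSpace ℂ W] [CompleteSpace W]
    {F : W × ℂ → ℂ} {L : ℝ≥0} {R : ℝ} (hF : ContDiff ℂ 1 F)
    (hFb : ∀ q ∈ closedBall 0 R, ‖F q‖ ≤ L) (hFL : LipschitzOnWith L F (closedBall 0 R))
    (hR : 2 ≤ R) {Y : X → W} {C : X → ℂ} {s : Set X} (hY : DifferentiableOn ℂ Y s)
    (hC : DifferentiableOn ℂ C s) (hYR : ∀ x ∈ s, ‖Y x‖ ≤ R) (hCL : ∀ x ∈ s, ‖C x‖ * L ≤ 1 / 2) :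
    ∃ U : X → ℂ, DifferentiableOn ℂ U s ∧
      ∀ x ∈ s, ‖U x‖ ≤ 2 ∧ 1 + U x + C x * F (Y x, U x) = 0 := by
  choose! U hU hU0 using fun x hx =>
    exists_one_add_add_mul_eq_zero hFb hFL hR (hYR x hx) (hCL x hx)
  have hUball : ∀ x ∈ s, U x ∈ ball (-1 : ℂ) 1 := fun x hx => by
    rw [mem_ball, dist_eq_norm, sub_neg_eq_add]; linarith [hU x hx]
  refine ⟨U, ?_, fun x hx => ⟨?_, hU0 x hx⟩⟩
  · refine differentiableOn_of_unique_zero (G := fun p => 1 + p.2 + p.1.2 * F (p.1.1, p.2))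
      (by fun_prop) (hY.prodMk hC) isOpen_ball hUball hU0 (fun x hx v hv hv0 => ?_) fun x hx => ?_
    · exact eq_of_one_add_add_mul_eq_zero hFL hR (hYR x hx) (hCL x hx) (ball_subset_closedBall hv)
        (ball_subset_closedBall (hUball x hx)) hv0 (hU0 x hx)
    · exact deriv_one_add_add_mul_ne_zero hFL hR (hYR x hx) (hCL x hx) (hUball x hx)
        ((hF.differentiable one_ne_zero).comp (by fun_prop) (U x))
  · simpa [one_add_one_eq_two] using
      norm_le_of_mem_closedBall (ball_subset_closedBall (hUball x hx))

theorem stmt_2_general (n d : ℕ) (M r : ℝ) :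
    ∃ ε > (0:ℝ), ∀ a : Fin (d + 1) → (Fin n → ℂ) → ℂ,
      (∀ i, DifferentiableOn ℂ (a i) (closedBall (0 : Fin n → ℂ) r)) →
      (∀ i, ∀ x ∈ closedBall (0 : Fin n → ℂ) r, ‖a i x‖ < M) →
      ∀ α c : (Fin n → ℂ) → ℂ,
        DifferentiableOn ℂ α (closedBall (0 : Fin n → ℂ) r) →
        DifferentiableOn ℂ c (closedBall (0 : Fin n → ℂ) r) →
        (∀ x ∈ closedBall (0 : Fin n → ℂ) r, ‖α x‖ < M) →
        (∀ x ∈ closedBall (0 : Fin n → ℂ) r, ‖c x‖ < ε) →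
        -- A ∘ α = c · (∂A/∂z ∘ α)²
        (∀ x ∈ closedBall (0 : Fin n → ℂ) r,
          (∑ i : Fin (d + 1), a i x * (α x) ^ (d - (i : ℕ))) =
            c x * (∑ i : Fin (d + 1), ((d - (i : ℕ) : ℕ) : ℂ) * a i x * (α x) ^ (d - (i : ℕ) - 1)) ^ 2) →
        ∃ b : (Fin n → ℂ) → ℂ,
          DifferentiableOn ℂ b (closedBall (0 : Fin n → ℂ) r) ∧
          (∀ x ∈ closedBall (0 : Fin n → ℂ) r,
            (∑ i : Fin (d + 1), a i x * (b x) ^ (d - (i : ℕ))) = 0) ∧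
          ∀ x ∈ closedBall (0 : Fin n → ℂ) r,
            ‖b x - α x‖ ≤ 2 * ⨆ y ∈ closedBall (0 : Fin n → ℂ) r,
              ‖c y * (∑ i : Fin (d + 1), ((d - (i : ℕ) : ℕ) : ℂ) * a i y * (α y) ^ (d - (i : ℕ) - 1))‖ := by
  set S : ((Fin (d + 1) → ℂ) × ℂ × ℂ) × ℂ → ℂ :=
    fun p => taylorTail p.1.1 p.1.2.1 (p.1.2.2 * polyDeriv p.1.1 p.1.2.1) p.2
  have hS : ContDiff ℂ 1 S := by fun_prop
  obtain ⟨L, hSb, hSL⟩ :=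
    (hS.restrict_scalars ℝ).exists_bound_lipschitzOnWith_closedBall 0 (max M 2)
  have hεL : (2 * (L + 1) : ℝ)⁻¹ * L ≤ 1 / 2 := by
    rw [inv_mul_le_iff₀ (by positivity)]; linarith
  have hε : (2 * (L + 1) : ℝ)⁻¹ ≤ 2 := by
    rw [inv_le_comm₀ (by positivity) two_pos]; linarith [L.coe_nonneg]
  refine ⟨(2 * (L + 1))⁻¹, by positivity, fun a ha haM α c hα hc hαM hcε heq => ?_⟩
  have hY : ∀ x ∈ closedBall (0 : Fin n → ℂ) r,
      ‖((fun i => a i x, α x, c x) : (Fin (d + 1) → ℂ) × ℂ × ℂ)‖ ≤ max M 2 := fun x hx =>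
    norm_prod_le_iff.2 ⟨(pi_norm_le_iff_of_nonneg (by positivity)).2 fun i =>
        (haM i x hx).le.trans (le_max_left _ _), norm_prod_le_iff.2
        ⟨(hαM x hx).le.trans (le_max_left _ _), ((hcε x hx).le.trans hε).trans (le_max_right _ _)⟩⟩
  obtain ⟨U, hUdiff, hU⟩ := exists_differentiableOn_one_add_add_mul_eq_zero hS hSb hSL
    (le_max_right M 2) ((differentiableOn_pi.2 ha).prodMk (hα.prodMk hc)) hc hY
    fun x hx => (mul_le_mul_of_nonneg_right (hcε x hx).le L.coe_nonneg).trans hεL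
  have hP : DifferentiableOn ℂ (fun x => polyDeriv (fun i => a i x) (α x)) (closedBall 0 r) :=
    DifferentiableOn.polyDeriv ha hα
  refine ⟨fun x => α x + c x * polyDeriv (fun i => a i x) (α x) * U x, by fun_prop,
    fun x hx => (polyEval_add_mul_of_eq (heq x hx) (U x)).trans (by rw [(hU x hx).2, mul_zero]),
    fun x hx => ?_⟩
  calc ‖α x + c x * polyDeriv (fun i => a i x) (α x) * U x - α x‖
      = ‖c x * polyDeriv (fun i => a i x) (α x)‖ * ‖U x‖ := by rw [add_sub_cancel_left, norm_mul]
    _ ≤ ‖c x * polyDeriv (fun i => a i x) (α x)‖ * 2 := by gcongr; exact (hU x hx).1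
    _ ≤ 2 * _ := by
      rw [mul_comm]
      exact mul_le_mul_of_nonneg_left ((isCompact_closedBall _ r).le_biSup_of_continuousOn
        (hc.mul hP).continuousOn.norm hx) two_pos.le

theorem stmt_2 (n d : ℕ) (hd : 0 < d) (M r : ℝ) (hM : 0 < M) (hr : 0 < r) :
    ∃ ε > (0:ℝ), ∀ a : Fin (d + 1) → (Fin n → ℂ) → ℂ,
      (∀ i, DifferentiableOn ℂ (a i) (closedBall (0 : Fin n → ℂ) r)) →
      (∀ i, ∀ x ∈ closedBall (0 : Fin n → ℂ) r, ‖a i x‖ < M) →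
      ∀ α c : (Fin n → ℂ) → ℂ,
        DifferentiableOn ℂ α (closedBall (0 : Fin n → ℂ) r) →
        DifferentiableOn ℂ c (closedBall (0 : Fin n → ℂ) r) →
        (∀ x ∈ closedBall (0 : Fin n → ℂ) r, ‖α x‖ < M) →
        (∀ x ∈ closedBall (0 : Fin n → ℂ) r, ‖c x‖ < ε) →
        -- A ∘ α = c · (∂A/∂z ∘ α)²
        (∀ x ∈ closedBall (0 : Fin n → ℂ) r,
          (∑ i : Fin (d + 1), a i x * (α x) ^ (d - (i : ℕ))) =
            c x * (∑ i : Fin (d + 1), ((d - (i : ℕ) : ℕ) : ℂ) * a i x * (α x) ^ (d - (i : ℕ) - 1)) ^ 2) →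
        ∃ b : (Fin n → ℂ) → ℂ,
          DifferentiableOn ℂ b (closedBall (0 : Fin n → ℂ) r) ∧
          (∀ x ∈ closedBall (0 : Fin n → ℂ) r,
            (∑ i : Fin (d + 1), a i x * (b x) ^ (d - (i : ℕ))) = 0) ∧
          ∀ x ∈ closedBall (0 : Fin n → ℂ) r,
            ‖b x - α x‖ ≤ 2 * ⨆ y ∈ closedBall (0 : Fin n → ℂ) r,
              ‖c y * (∑ i : Fin (d + 1), ((d - (i : ℕ) : ℕ) : ℂ) * a i y * (α y) ^ (d - (i : ℕ) - 1))‖ :=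
  stmt_2_general n d M r
end

section
/- Let U ⊆ C^n and U' ⊆ C be domains and let E ⊆ U × U' be a purely n-dimensional analytic set with proper projection π̃ onto U, described by a unitary polynomial p ∈ O(U)[z] (the optimal polynomial for E) with discriminant Δ_p ≢ 0. Then the image under π̃ of the set S(E) of singular points of the projection π̃|_E equals {x ∈ U : Δ_p(x) = 0}. -/
open Filter Topology

/-- `X` is an analytic subset of `Ω`: near every point of `Ω` it is the common zero set
of finitely many holomorphic functions. -/
def IsAnalyticIn {E : Type} [NormedAddCommGroup E] [NormedSpace ℂ E] (Ω X : Set E) : Prop :=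
  X ⊆ Ω ∧ ∀ z ∈ Ω, ∃ U : Set E, IsOpen U ∧ z ∈ U ∧ ∃ (N : ℕ) (g : Fin N → E → ℂ),
    (∀ i, DifferentiableOn ℂ (g i) U) ∧ X ∩ U = {x ∈ U | ∀ i, g i x = 0}

/-- `x` is a regular point of `X` of (complex) dimension `d`: near `x`, after a
`ℂ`-linear change of coordinates, `X` is the graph of a holomorphic map defined on an
open subset of `ℂ^d`. -/
def IsRegPtOfDim {E : Type} [NormedAddCommGroup E] [NormedSpace ℂ E]
    (d : ℕ) (X : Set E) (x : E) : Prop :=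
  ∃ U : Set E, IsOpen U ∧ x ∈ U ∧
    ∃ (e : ℕ) (L : E ≃L[ℂ] ((Fin d → ℂ) × (Fin e → ℂ)))
      (Ω : Set (Fin d → ℂ)) (g : (Fin d → ℂ) → (Fin e → ℂ)),
      IsOpen Ω ∧ DifferentiableOn ℂ g Ω ∧
      L '' (X ∩ U) = {p : (Fin d → ℂ) × (Fin e → ℂ) | p.1 ∈ Ω ∧ p.2 = g p.1}

/-- `X` has pure dimension `d`: regular points (necessarily of dimension `d`) are dense in `X`. -/
def PureDim {E : Type} [NormedAddCommGroup E] [NormedSpace ℂ E] (X : Set E) (d : ℕ) : Prop :=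
  (∀ x ∈ X, x ∈ closure {y | y ∈ X ∧ IsRegPtOfDim d X y}) ∧
  (∀ e : ℕ, ∀ x ∈ X, IsRegPtOfDim e X x → e = d)

/-- `d` is the dimension of `X`: the maximum of the dimensions at regular points. -/
def SetDimIs {E : Type} [NormedAddCommGroup E] [NormedSpace ℂ E] (X : Set E) (d : ℕ) : Prop :=
  (∃ x ∈ X, IsRegPtOfDim d X x) ∧ ∀ e : ℕ, ∀ x ∈ X, IsRegPtOfDim e X x → e ≤ d

/-- The natural projection restricted to `Y` is proper over `U`. -/
def ProperProjOn {A B : Type} [TopologicalSpace A] [TopologicalSpace B]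
    (U : Set A) (Y : Set (A × B)) : Prop :=
  ∀ K ⊆ U, IsCompact K → IsCompact {p | p ∈ Y ∧ p.1 ∈ K}

/-- The projection `π|_Y` is regular (an analytic isomorphism) at `p`:
near `p`, `Y` is the graph of a holomorphic map. -/
def ProjRegularAt {A B : Type} [NormedAddCommGroup A] [NormedSpace ℂ A]
    [NormedAddCommGroup B] [NormedSpace ℂ B] (Y : Set (A × B)) (p : A × B) : Prop :=
  ∃ W : Set A, IsOpen W ∧ p.1 ∈ W ∧ ∃ g : A → B, DifferentiableOn ℂ g W ∧
    ∃ V : Set (A × B), IsOpen V ∧ p ∈ V ∧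
      Y ∩ V = {q : A × B | q.1 ∈ W ∧ q.2 = g q.1} ∩ V

/-- The set `S(Y, π)` of singular points of the projection `π|_Y`. -/
def SingProj {A B : Type} [NormedAddCommGroup A] [NormedSpace ℂ A]
    [NormedAddCommGroup B] [NormedSpace ℂ B] (Y : Set (A × B)) : Set (A × B) :=
  {p | p ∈ Y ∧ ¬ ProjRegularAt Y p}

/-- `X` is irreducible as an analytic subset of `Ω`. -/
def IrredAnalyticIn {E : Type} [NormedAddCommGroup E] [NormedSpace ℂ E] (Ω X : Set E) : Prop :=
  IsAnalyticIn Ω X ∧ X.Nonempty ∧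
    ∀ X₁ X₂ : Set E, IsAnalyticIn Ω X₁ → IsAnalyticIn Ω X₂ → X = X₁ ∪ X₂ → X = X₁ ∨ X = X₂

/-- `C` is an irreducible analytic component of `X` (inside `Ω`). -/
def IsIrredComp {E : Type} [NormedAddCommGroup E] [NormedSpace ℂ E] (Ω X C : Set E) : Prop :=
  IrredAnalyticIn Ω C ∧ C ⊆ X ∧
    ∀ C' : Set E, IrredAnalyticIn Ω C' → C ⊆ C' → C' ⊆ X → C' = C

/-- `Z` has generic fiber cardinality `s` over `E`: outside a proper analytic subset of `E`
every fiber of the projection has exactly `s` points. -/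
def GenFiberCard {A B : Type} [NormedAddCommGroup A] [NormedSpace ℂ A]
    (E : Set A) (Z : Set (A × B)) (s : ℕ) : Prop :=
  ∃ T : Set A, IsAnalyticIn E T ∧ T ≠ E ∧ ∀ x ∈ E \ T, Set.ncard {v : B | (x, v) ∈ Z} = s

/-- An algebraic subset of `ℂ^N`. -/
def IsAlgSet (N : ℕ) (V : Set (Fin N → ℂ)) : Prop :=
  ∃ (q : ℕ) (ps : Fin q → MvPolynomial (Fin N) ℂ),
    V = {y | ∀ i, MvPolynomial.eval y (ps i) = 0}

/-- A Nash function on an open set `U ⊆ ℂ^N`. -/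
def NashFn (N : ℕ) (U : Set (Fin N → ℂ)) (f : (Fin N → ℂ) → ℂ) : Prop :=
  DifferentiableOn ℂ f U ∧ ∀ x₀ ∈ U, ∃ V : Set (Fin N → ℂ), IsOpen V ∧ x₀ ∈ V ∧
    ∃ P : Polynomial (MvPolynomial (Fin N) ℂ), P ≠ 0 ∧
      ∀ x ∈ V ∩ U, Polynomial.eval₂ (MvPolynomial.eval x) (f x) P = 0

/-- `X` is a Nash subset of `Ω ⊆ ℂ^N`. -/
def IsNashIn (N : ℕ) (Ω X : Set (Fin N → ℂ)) : Prop :=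
  X ⊆ Ω ∧ ∀ z ∈ Ω, ∃ U : Set (Fin N → ℂ), IsOpen U ∧ z ∈ U ∧
    ∃ (q : ℕ) (g : Fin q → (Fin N → ℂ) → ℂ),
      (∀ i, NashFn N U (g i)) ∧ X ∩ U = {x ∈ U | ∀ i, g i x = 0}

/-! Over a point `x₀` with `Δ x₀ ≠ 0` every root `z₀` of `p x₀` is simple, so the divided
difference `(p x (ζ) - p x (w)) / (ζ - w)`, i.e. `p x /ₘ (X - C w)` evaluated at `ζ`, stays
nonzero near `(x₀, z₀, z₀)`. Hence near `z₀` each `p x` has exactly one root `g x`; it is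
continuous by continuity of roots, and holomorphic because `g x - g x₁` equals
`-(p x)(g x₁)` divided by that nonvanishing divided difference.

Conversely, if `z₀` is a multiple root and `E` is the graph of a holomorphic `g` near
`(x₀, z₀)`, then `p x /ₘ (X - C (g x))` has a root near `z₀` for `x` near `x₀`; that root lies
on `E` and so equals `g x`, making `g x` a multiple root. Thus `Δ` vanishes near `x₀`, hence on
the connected set `U` by the identity theorem, contradicting `Δ ≢ 0`. -/

open Polynomial Filter Topology Metric Set

section IdentityTheorem

variable {E F : Type*} [NormedAddCommGroup E] [NormedSpace ℂ E]
  [NormedAddCommGroup F] [NormedSpace ℂ F] [CompleteSpace F]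

/- Restricted to the complex line through `y` and `w`, `f` is a holomorphic function of one
variable on a disc, where the one-variable identity theorem applies. -/
theorem DifferentiableOn.eqOn_zero_ball_of_eventuallyEq_zero {f : E → F} {y : E} {r : ℝ}
    (hf : DifferentiableOn ℂ f (ball y r)) (hfy : f =ᶠ[𝓝 y] 0) : EqOn f 0 (ball y r) := by
  intro w hw
  rcases eq_or_ne w y with rfl | hwy
  · exact hfy.eq_of_nhds
  have hnorm : 0 < ‖w - y‖ := norm_pos_iff.2 (sub_ne_zero.2 hwy)
  set ℓ : ℂ → E := fun t => y + t • (w - y)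
  have hℓ : MapsTo ℓ (ball 0 (r / ‖w - y‖)) (ball y r) := by
    intro t ht
    rw [mem_ball_zero_iff, lt_div_iff₀ hnorm] at ht
    simpa [ℓ, norm_smul] using ht
  have h1 : (1 : ℂ) ∈ ball 0 (r / ‖w - y‖) := by
    rw [mem_ball_zero_iff, norm_one, one_lt_div hnorm, ← dist_eq_norm]
    exact hw
  have hana : AnalyticOnNhd ℂ (f ∘ ℓ) (ball 0 (r / ‖w - y‖)) :=
    (hf.comp (by fun_prop) hℓ).analyticOnNhd isOpen_ball
  have hℓ0 : Tendsto ℓ (𝓝 0) (𝓝 y) := by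
    simpa [ℓ] using (show Continuous ℓ by fun_prop).tendsto 0
  have := hana.eqOn_zero_of_preconnected_of_eventuallyEq_zero
    (convex_ball _ _).isPreconnected (mem_ball_self (pos_of_mem_ball h1)) (hℓ0.eventually hfy) h1
  simpa [ℓ] using this

theorem DifferentiableOn.eqOn_zero_of_preconnected_of_eventuallyEq_zero {f : E → F}
    {U : Set E} (hf : DifferentiableOn ℂ f U) (hU : IsOpen U) (hUc : IsPreconnected U)
    {z₀ : E} (h₀ : z₀ ∈ U) (hfz₀ : f =ᶠ[𝓝 z₀] 0) : EqOn f 0 U := by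
  suffices hsub : U ⊆ {x | f =ᶠ[𝓝 x] 0} from fun x hx => (hsub hx).eq_of_nhds
  refine hUc.subset_of_closure_inter_subset isOpen_setOfPred_eventually_nhds ⟨z₀, h₀, hfz₀⟩ ?_
  rintro x ⟨hxc, hxU⟩
  obtain ⟨r, hr, hrU⟩ := Metric.isOpen_iff.1 hU x hxU
  obtain ⟨y, hy, hxy⟩ := Metric.mem_closure_iff.1 hxc (r / 2) (half_pos hr)
  have hball : ball y (r / 2) ⊆ U := fun w hw => hrU <| by
    rw [mem_ball] at hw ⊢
    linarith [dist_triangle w y x, dist_comm x y]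
  exact eventuallyEq_of_mem (isOpen_ball.mem_nhds (mem_ball.2 hxy))
    ((hf.mono hball).eqOn_zero_ball_of_eventuallyEq_zero hy)

end IdentityTheorem

theorem HasFDerivAt.mul_continuousAt_of_eq_zero {𝕜 E : Type*} [NontriviallyNormedField 𝕜]
    [NormedAddCommGroup E] [NormedSpace 𝕜 E] {f h : E → 𝕜} {f' : E →L[𝕜] 𝕜} {x : E}
    (hf : HasFDerivAt f f' x) (hfx : f x = 0) (hh : ContinuousAt h x) :
    HasFDerivAt (fun y => f y * h y) (h x • f') x := by
  rw [hasFDerivAt_iff_isLittleO]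
  have hrem : (fun y => (f y - f x - f' (y - x)) * h y) =o[𝓝 x] fun y => y - x := by
    have hbdd := (Asymptotics.isBigO_refl (fun y => f y - f x - f' (y - x)) (𝓝 x)).mul
      (hh.tendsto.isBigO_one 𝕜)
    simp only [mul_one] at hbdd
    exact hbdd.trans_isLittleO hf.isLittleO
  have hlin : (fun y => (h y - h x) • f' (y - x)) =o[𝓝 x] fun y => (1 : 𝕜) • (y - x) :=
    ((Asymptotics.isLittleO_one_iff 𝕜).2 (by simpa using hh.tendsto.sub_const (h x))).smul_isBigO
      (f'.isBigO_sub _ _)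
  refine (hrem.add (by simpa using hlin)).congr_left fun y => ?_
  simp only [hfx, smul_eq_mul, FunLike.coe_smul, Pi.smul_apply, map_sub]
  ring

namespace Polynomial

theorem eval_sub_eval_eq_mul_eval_divByMonic {R : Type*} [CommRing R] (f : R[X]) (w ζ : R) :
    f.eval ζ - f.eval w = (ζ - w) * (f /ₘ (X - C w)).eval ζ := by
  simpa [modByMonic_X_sub_C_eq_C_eval] using
    (congrArg (eval ζ) (X_sub_C_mul_divByMonic_eq_sub_modByMonic f w)).symm

theorem eval_divByMonic_X_sub_C_self {R : Type*} [CommRing R] (f : R[X]) (w : R) :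
    (f /ₘ (X - C w)).eval w = (derivative f).eval w := by
  simpa using
    congrArg (eval w) (divByMonic_add_X_sub_C_mul_derivative_divByMonic_eq_derivative f w)

theorem degree_sum_C_mul_X_pow_sub_one_sub_lt {R : Type*} [Semiring R] {d : ℕ}
    (c : Fin d → R) : (∑ i : Fin d, C (c i) * X ^ (d - 1 - (i : ℕ))).degree < (d : WithBot ℕ) := by
  rw [Fintype.sum_equiv Fin.revPerm _ (fun j => C (c (Fin.rev j)) * X ^ (j : ℕ))
    (fun i => by simp only [Fin.revPerm_apply, Fin.rev_rev, Fin.val_rev]; congr 2; omega)]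
  exact degree_sum_fin_lt _

section Families

variable {T : Type*} [TopologicalSpace T] {t₀ : T}

theorem continuousAt_eval_of_continuousAt_coeff {R : Type*} [CommSemiring R] [TopologicalSpace R]
    [IsTopologicalSemiring R] {P : T → R[X]} {N : ℕ} (hdeg : ∀ t, (P t).natDegree ≤ N)
    (hcoeff : ∀ i, ContinuousAt (fun t => (P t).coeff i) t₀) {z : T → R}
    (hz : ContinuousAt z t₀) : ContinuousAt (fun t => (P t).eval (z t)) t₀ := by
  have hsum : ContinuousAt (fun t => ∑ i ∈ Finset.range (N + 1), (P t).coeff i * z t ^ i) t₀ :=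
    tendsto_finsetSum _ fun i _ => (hcoeff i).mul (hz.pow i)
  exact hsum.congr (Eventually.of_forall fun t =>
    (eval_eq_sum_range' (Nat.lt_succ_of_le (hdeg t)) (z t)).symm)

theorem continuousAt_coeff_divByMonic_X_sub_C {R : Type*} [CommRing R] [TopologicalSpace R]
    [IsTopologicalRing R] {P : T → R[X]} {N : ℕ} (hdeg : ∀ t, (P t).natDegree = N)
    (hcoeff : ∀ i, ContinuousAt (fun t => (P t).coeff i) t₀) {w : T → R}
    (hw : ContinuousAt w t₀) (n : ℕ) :
    ContinuousAt (fun t => (P t /ₘ (X - C (w t))).coeff n) t₀ := by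
  simp only [coeff_divByMonic_X_sub_C, hdeg]
  exact tendsto_finsetSum _ fun i _ => (hw.pow _).mul (hcoeff i)

theorem continuousAt_eval_divByMonic_X_sub_C {R : Type*} [CommRing R] [TopologicalSpace R]
    [IsTopologicalRing R] {P : T → R[X]} {N : ℕ} (hdeg : ∀ t, (P t).natDegree = N)
    (hcoeff : ∀ i, ContinuousAt (fun t => (P t).coeff i) t₀) {w z : T → R}
    (hw : ContinuousAt w t₀) (hz : ContinuousAt z t₀) :
    ContinuousAt (fun t => (P t /ₘ (X - C (w t))).eval (z t)) t₀ :=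
  continuousAt_eval_of_continuousAt_coeff
    (fun t => by rw [natDegree_divByMonic _ (monic_X_sub_C _), hdeg]; exact Nat.sub_le _ _)
    (continuousAt_coeff_divByMonic_X_sub_C hdeg hcoeff hw) hz

theorem eventually_forall_norm_coeff_sub_lt {R : Type*} [NormedRing R] {P : T → R[X]} {N : ℕ}
    (hdeg : ∀ t, (P t).natDegree ≤ N) (hcoeff : ∀ i, ContinuousAt (fun t => (P t).coeff i) t₀)
    {ε : ℝ} (hε : 0 < ε) : ∀ᶠ t in 𝓝 t₀, ∀ i, ‖(P t).coeff i - (P t₀).coeff i‖ < ε := by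
  have hclose : ∀ᶠ t in 𝓝 t₀, ∀ i ∈ Finset.range (N + 1), ‖(P t).coeff i - (P t₀).coeff i‖ < ε :=
    (eventually_all_finset _).2 fun i _ =>
      (Metric.tendsto_nhds.1 (hcoeff i) ε hε).mono fun t ht => by rwa [← dist_eq_norm]
  filter_upwards [hclose] with t ht i
  by_cases hi : i < N + 1
  · exact ht i (Finset.mem_range.2 hi)
  · rw [coeff_eq_zero_of_natDegree_lt (by have := hdeg t; omega),
      coeff_eq_zero_of_natDegree_lt (by have := hdeg t₀; omega)]
    simpa using hε

theorem eventually_exists_isRoot_dist_lt {P : T → ℂ[X]} {N : ℕ} (hmon : ∀ t, (P t).Monic)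
    (hdeg : ∀ t, (P t).natDegree = N) (hcoeff : ∀ i, ContinuousAt (fun t => (P t).coeff i) t₀)
    {a : ℂ} (ha : (P t₀).IsRoot a) {δ : ℝ} (hδ : 0 < δ) :
    ∀ᶠ t in 𝓝 t₀, ∃ b, (P t).IsRoot b ∧ dist b a < δ := by
  have hN : N ≠ 0 := by
    rintro rfl
    rw [(hmon t₀).natDegree_eq_zero.1 (hdeg t₀)] at ha
    simp at ha
  -- `exists_roots_norm_sub_lt_of_norm_coeff_sub_lt` moves a root by at most
  -- `((N + 1) * ε) ^ (1 / N) * max ‖a‖ 1` when all coefficients move by less than `ε`.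
  set M := max ‖a‖ 1
  have hbound : ContinuousAt (fun ε : ℝ => ((N + 1) * ε) ^ (N⁻¹ : ℝ) * M) 0 :=
    ((Real.continuousAt_rpow_const _ _ (Or.inr (by positivity))).comp
      (continuousAt_const.mul continuousAt_id)).mul continuousAt_const
  have hbound0 : ((N + 1) * (0 : ℝ)) ^ (N⁻¹ : ℝ) * M = 0 := by
    simp [Real.zero_rpow (inv_ne_zero (Nat.cast_ne_zero.2 hN))]
  have hlim := hbound.tendsto
  rw [hbound0] at hlim
  obtain ⟨ε, hεδ, hε⟩ : ∃ ε : ℝ, ((N + 1) * ε) ^ (N⁻¹ : ℝ) * M < δ ∧ 0 < ε :=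
    ((hlim.mono_left nhdsWithin_le_nhds).eventually (gt_mem_nhds hδ)).and
      self_mem_nhdsWithin |>.exists (f := 𝓝[>] 0)
  filter_upwards [eventually_forall_norm_coeff_sub_lt (fun t => (hdeg t).le) hcoeff hε]
    with t hcoeff_lt
  obtain ⟨b, hb, hab⟩ := exists_roots_norm_sub_lt_of_norm_coeff_sub_lt hε ha (hmon t₀) (hmon t)
    (by rw [hdeg, hdeg]) hcoeff_lt (IsAlgClosed.splits _)
  refine ⟨b, isRoot_of_mem_roots hb, ?_⟩
  rw [dist_comm, dist_eq_norm]
  rw [hdeg] at hab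
  exact hab.trans hεδ

theorem continuousAt_of_eventually_unique_root {P : T → ℂ[X]} {N : ℕ} {t₁ : T}
    (hmon : ∀ t, (P t).Monic) (hdeg : ∀ t, (P t).natDegree = N)
    (hcoeff : ∀ i, ContinuousAt (fun t => (P t).coeff i) t₁) {g : T → ℂ} {ε : ℝ} (hε : 0 < ε)
    (hroot : (P t₁).IsRoot (g t₁))
    (huniq : ∀ᶠ t in 𝓝 t₁, ∀ ζ, (P t).IsRoot ζ → dist ζ (g t₁) < ε → ζ = g t) :
    ContinuousAt g t₁ := by
  rw [ContinuousAt, Metric.tendsto_nhds]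
  intro η hη
  filter_upwards [eventually_exists_isRoot_dist_lt hmon hdeg hcoeff hroot (lt_min hη hε), huniq]
    with t ⟨ζ, hζ, hζd⟩ ht
  rw [← ht ζ hζ (hζd.trans_le (min_le_right _ _))]
  exact hζd.trans_le (min_le_left _ _)

end Families

theorem exists_pos_simple_unique_roots_near {M : Type*} [PseudoMetricSpace M] {P : M → ℂ[X]}
    {N : ℕ} {x₀ : M} (hdeg : ∀ x, (P x).natDegree = N)
    (hcoeff : ∀ i, ContinuousAt (fun x => (P x).coeff i) x₀) {z₀ : ℂ}
    (hz₀ : (derivative (P x₀)).eval z₀ ≠ 0) :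
    ∃ ε > 0, ∀ x, dist x x₀ < ε → ∀ w, dist w z₀ < ε → (derivative (P x)).eval w ≠ 0 ∧
      ∀ ζ, dist ζ z₀ < ε → (P x).eval w = 0 → (P x).eval ζ = 0 → ζ = w := by
  have hD : ContinuousAt (fun q : M × ℂ × ℂ => (P q.1 /ₘ (X - C q.2.1)).eval q.2.2)
      (x₀, z₀, z₀) :=
    continuousAt_eval_divByMonic_X_sub_C (P := fun q : M × ℂ × ℂ => P q.1) (fun q => hdeg q.1)
      (fun i => (hcoeff i).fst') (by fun_prop) (by fun_prop)
  obtain ⟨ε, hε, h⟩ := Metric.eventually_nhds_iff.1 (hD.eventually_ne <| by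
    simpa [eval_divByMonic_X_sub_C_self] using hz₀)
  refine ⟨ε, hε, fun x hx w hw => ⟨?_, fun ζ hζ hPw hPζ => ?_⟩⟩
  · simpa [eval_divByMonic_X_sub_C_self] using
      h (y := (x, w, w)) (by simp [Prod.dist_eq, hx, hw])
  · have hdiff := eval_sub_eval_eq_mul_eval_divByMonic (P x) w ζ
    rw [hPw, hPζ, sub_zero, eq_comm, mul_eq_zero, sub_eq_zero] at hdiff
    exact hdiff.resolve_right (h (y := (x, w, ζ)) (by simp [Prod.dist_eq, hx, hw, hζ]))

variable {A : Type*} [NormedAddCommGroup A] [NormedSpace ℂ A]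

theorem differentiableOn_eval_of_differentiableOn_coeff {U : Set A} {P : A → ℂ[X]} {N : ℕ}
    (hdeg : ∀ x, (P x).natDegree ≤ N) (hcoeff : ∀ i, DifferentiableOn ℂ (fun x => (P x).coeff i) U)
    (w : ℂ) : DifferentiableOn ℂ (fun x => (P x).eval w) U := by
  simp only [fun x => eval_eq_sum_range' (Nat.lt_succ_of_le (hdeg x)) w]
  exact DifferentiableOn.fun_sum fun i _ => (hcoeff i).mul_const _

theorem differentiableAt_of_continuousAt_simple_root {P : A → ℂ[X]} {N : ℕ} {g : A → ℂ} {x₁ : A}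
    (hdeg : ∀ x, (P x).natDegree = N) (hcoeff : ∀ i, ContinuousAt (fun x => (P x).coeff i) x₁)
    (hdiff : DifferentiableAt ℂ (fun x => (P x).eval (g x₁)) x₁) (hg : ContinuousAt g x₁)
    (hroot : ∀ᶠ x in 𝓝 x₁, (P x).eval (g x) = 0)
    (hsimple : (derivative (P x₁)).eval (g x₁) ≠ 0) : DifferentiableAt ℂ g x₁ := by
  set k : A → ℂ := fun x => (P x /ₘ (X - C (g x₁))).eval (g x)
  have hk : ContinuousAt k x₁ :=
    continuousAt_eval_divByMonic_X_sub_C hdeg hcoeff continuousAt_const hg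
  have hk₁ : k x₁ ≠ 0 := by simpa [k, eval_divByMonic_X_sub_C_self] using hsimple
  have hformula : (fun x => g x₁ - (P x).eval (g x₁) * (k x)⁻¹) =ᶠ[𝓝 x₁] g := by
    filter_upwards [hroot, hk.eventually_ne hk₁] with x hx hkx
    have h := eval_sub_eval_eq_mul_eval_divByMonic (P x) (g x₁) (g x)
    rw [hx] at h
    field_simp
    linear_combination h
  exact (((hdiff.hasFDerivAt.mul_continuousAt_of_eq_zero hroot.self_of_nhds
    (hk.inv₀ hk₁)).const_sub (g x₁)).differentiableAt).congr_of_eventuallyEq hformula.symm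

end Polynomial

section RootLocus

variable {A : Type} [NormedAddCommGroup A] [NormedSpace ℂ A]

def rootLocus (U : Set A) (P : A → ℂ[X]) : Set (A × ℂ) := {q | q.1 ∈ U ∧ (P q.1).eval q.2 = 0}

variable {U : Set A} {P : A → ℂ[X]} {N : ℕ}

theorem exists_differentiableOn_local_root (hU : IsOpen U) (hmon : ∀ x, (P x).Monic)
    (hdeg : ∀ x, (P x).natDegree = N)
    (hcoeff : ∀ i, DifferentiableOn ℂ (fun x => (P x).coeff i) U) {x₀ : A} {z₀ : ℂ}
    (hx₀ : x₀ ∈ U) (hz₀ : (P x₀).eval z₀ = 0) (hz₀' : (derivative (P x₀)).eval z₀ ≠ 0) :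
    ∃ W : Set A, IsOpen W ∧ x₀ ∈ W ∧ W ⊆ U ∧ ∃ ε > 0, ∃ g : A → ℂ, DifferentiableOn ℂ g W ∧
      ∀ x ∈ W, ∀ ζ, dist ζ z₀ < ε → ((P x).eval ζ = 0 ↔ ζ = g x) := by
  have hcont : ∀ x ∈ U, ∀ i, ContinuousAt (fun x => (P x).coeff i) x := fun x hx i =>
    ((hcoeff i).differentiableAt (hU.mem_nhds hx)).continuousAt
  obtain ⟨ε, hε, hnear⟩ := exists_pos_simple_unique_roots_near hdeg (hcont x₀ hx₀) hz₀'
  set W := interior {x | x ∈ U ∧ dist x x₀ < ε ∧ ∃ ζ, (P x).IsRoot ζ ∧ dist ζ z₀ < ε / 2}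
  have hx₀W : x₀ ∈ W := mem_interior_iff_mem_nhds.2 <| by
    filter_upwards [hU.mem_nhds hx₀, Metric.ball_mem_nhds x₀ hε,
      eventually_exists_isRoot_dist_lt hmon hdeg (hcont x₀ hx₀) hz₀ (half_pos hε)]
      with x hxU hxε hroot using ⟨hxU, hxε, hroot⟩
  have hWU : ∀ x ∈ W, x ∈ U ∧ dist x x₀ < ε := fun x hx =>
    ⟨(interior_subset hx).1, (interior_subset hx).2.1⟩
  choose! g hg using fun x (hx : x ∈ W) => (interior_subset hx).2.2
  have hgε : ∀ x ∈ W, dist (g x) z₀ < ε := fun x hx => by linarith [(hg x hx).2]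
  have hgcont : ∀ x ∈ W, ContinuousAt g x := fun x hx =>
    continuousAt_of_eventually_unique_root hmon hdeg (hcont x (hWU x hx).1) (half_pos hε)
      (hg x hx).1 <| by
      filter_upwards [isOpen_interior.mem_nhds hx] with y hy ζ hζ hζd
      exact (hnear y (hWU y hy).2 (g y) (hgε y hy)).2 ζ
        (by linarith [dist_triangle ζ (g x) z₀, (hg x hx).2]) (hg y hy).1 hζ
  have hgdiff : DifferentiableOn ℂ g W := fun x hx =>
    (differentiableAt_of_continuousAt_simple_root hdeg (hcont x (hWU x hx).1)
      ((differentiableOn_eval_of_differentiableOn_coeff (fun y => (hdeg y).le) hcoeff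
        (g x)).differentiableAt (hU.mem_nhds (hWU x hx).1)) (hgcont x hx)
      (Filter.mem_of_superset (isOpen_interior.mem_nhds hx) fun y hy => (hg y hy).1)
      (hnear x (hWU x hx).2 (g x) (hgε x hx)).1).differentiableWithinAt
  refine ⟨W, isOpen_interior, hx₀W, fun x hx => (hWU x hx).1, ε / 2, half_pos hε, g, hgdiff,
    fun x hx ζ hζ => ⟨fun hPζ => ?_, by rintro rfl; exact (hg x hx).1⟩⟩
  exact (hnear x (hWU x hx).2 (g x) (hgε x hx)).2 ζ (by linarith) (hg x hx).1 hPζ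

theorem projRegularAt_rootLocus_of_eval_derivative_ne_zero (hU : IsOpen U)
    (hmon : ∀ x, (P x).Monic) (hdeg : ∀ x, (P x).natDegree = N)
    (hcoeff : ∀ i, DifferentiableOn ℂ (fun x => (P x).coeff i) U) {x₀ : A} {z₀ : ℂ}
    (hx₀ : x₀ ∈ U) (hz₀ : (P x₀).eval z₀ = 0) (hz₀' : (derivative (P x₀)).eval z₀ ≠ 0) :
    ProjRegularAt (rootLocus U P) (x₀, z₀) := by
  obtain ⟨W, hW, hx₀W, hWU, ε, hε, g, hg, hroot⟩ :=
    exists_differentiableOn_local_root hU hmon hdeg hcoeff hx₀ hz₀ hz₀'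
  refine ⟨W, hW, hx₀W, g, hg, W ×ˢ ball z₀ ε, hW.prod isOpen_ball,
    ⟨hx₀W, mem_ball_self hε⟩, ?_⟩
  ext ⟨x, ζ⟩
  simp only [rootLocus, mem_inter_iff, mem_ofPred_eq, mem_prod, mem_ball]
  constructor
  · rintro ⟨⟨-, hζ⟩, hxW, hζd⟩
    exact ⟨⟨hxW, (hroot x hxW ζ hζd).1 hζ⟩, hxW, hζd⟩
  · rintro ⟨⟨hxW, rfl⟩, -, hζd⟩
    exact ⟨⟨hWU hxW, (hroot x hxW _ hζd).2 rfl⟩, hxW, hζd⟩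

theorem eventually_exists_multiple_root_of_projRegularAt (hmon : ∀ x, (P x).Monic)
    (hdeg : ∀ x, (P x).natDegree = N) {x₀ : A} {z₀ : ℂ}
    (hcoeff : ∀ i, ContinuousAt (fun x => (P x).coeff i) x₀) (hU : U ∈ 𝓝 x₀)
    (hz₀ : (P x₀).eval z₀ = 0) (hz₀' : (derivative (P x₀)).eval z₀ = 0)
    (hreg : ProjRegularAt (rootLocus U P) (x₀, z₀)) :
    ∀ᶠ x in 𝓝 x₀, ∃ z, (P x).eval z = 0 ∧ (derivative (P x)).eval z = 0 := by
  obtain ⟨W, hW, hx₀W, g, hg, V, hV, hx₀V, hEV⟩ := hreg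
  have hgraph : ∀ q ∈ V, q ∈ rootLocus U P ↔ q.1 ∈ W ∧ q.2 = g q.1 := fun q hq => by
    simpa [hq] using Set.ext_iff.1 hEV q
  have hz₀g : z₀ = g x₀ := ((hgraph _ hx₀V).1 ⟨mem_of_mem_nhds hU, hz₀⟩).2
  have hgc : ContinuousAt g x₀ := (hg.differentiableAt (hW.mem_nhds hx₀W)).continuousAt
  have hN : 1 ≤ N := by
    by_contra! h
    rw [(hmon x₀).natDegree_eq_zero.1 (by rw [hdeg]; omega)] at hz₀
    simp at hz₀
  have hQmon : ∀ x, (P x /ₘ (X - C (g x))).Monic := fun x => by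
    refine (leadingCoeff_divByMonic_of_monic (monic_X_sub_C _) ?_).trans (hmon x)
    rw [degree_X_sub_C, degree_eq_natDegree (hmon x).ne_zero, hdeg]
    exact_mod_cast hN
  have hQdeg : ∀ x, (P x /ₘ (X - C (g x))).natDegree = N - 1 := fun x => by
    rw [natDegree_divByMonic _ (monic_X_sub_C _), hdeg, natDegree_X_sub_C]
  have hQroot : (P x₀ /ₘ (X - C (g x₀))).IsRoot z₀ := by
    rw [IsRoot, ← hz₀g, eval_divByMonic_X_sub_C_self, hz₀']
  have hgV : ∀ᶠ x in 𝓝 x₀, (x, g x) ∈ V :=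
    (continuousAt_id.prodMk hgc).preimage_mem_nhds (by rw [← hz₀g]; exact hV.mem_nhds hx₀V)
  obtain ⟨δ, hδ, hδV⟩ := Metric.isOpen_iff.1 hV _ hx₀V
  filter_upwards [eventually_exists_isRoot_dist_lt hQmon hQdeg
      (continuousAt_coeff_divByMonic_X_sub_C hdeg hcoeff hgc) hQroot hδ,
    hU, hW.mem_nhds hx₀W, hgV, Metric.ball_mem_nhds x₀ hδ]
    with x ⟨ζ, hζ, hζd⟩ hxU hxW hxV hxδ
  have hPg : (P x).eval (g x) = 0 := ((hgraph _ hxV).2 ⟨hxW, rfl⟩).2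
  have hPζ : (P x).eval ζ = 0 := by
    simpa [hPg, hζ.eq_zero] using eval_sub_eval_eq_mul_eval_divByMonic (P x) (g x) ζ
  have hζg : ζ = g x :=
    ((hgraph (x, ζ) (hδV (by simp [Prod.dist_eq, mem_ball.1 hxδ, hζd]))).1 ⟨hxU, hPζ⟩).2
  refine ⟨g x, hPg, ?_⟩
  rw [← eval_divByMonic_X_sub_C_self]
  rwa [hζg] at hζ

end RootLocus

theorem stmt_7_general (n d : ℕ) (U : Set (Fin n → ℂ)) (hU : IsOpen U) (hUc : IsConnected U)
    (E : Set ((Fin n → ℂ) × ℂ))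
    -- the optimal (unitary) polynomial p for E, given by holomorphic coefficients a
    (a : Fin d → (Fin n → ℂ) → ℂ) (ha : ∀ i, DifferentiableOn ℂ (a i) U)
    (p : (Fin n → ℂ) → Polynomial ℂ)
    (hp : ∀ x, p x = Polynomial.X ^ d +
      ∑ i : Fin d, Polynomial.C (a i x) * Polynomial.X ^ (d - 1 - (i : ℕ)))
    (hEdesc : E = {q : (Fin n → ℂ) × ℂ | q.1 ∈ U ∧ Polynomial.eval q.2 (p q.1) = 0})
    -- Δ is the discriminant of p: it vanishes exactly where p has a multiple root
    (Δ : (Fin n → ℂ) → ℂ) (hΔholo : DifferentiableOn ℂ Δ U)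
    (hΔ : ∀ x ∈ U, (Δ x = 0 ↔ ∃ z : ℂ,
      Polynomial.eval z (p x) = 0 ∧ Polynomial.eval z (Polynomial.derivative (p x)) = 0))
    (hΔne : ∃ x ∈ U, Δ x ≠ 0) :
    Prod.fst '' SingProj E = {x ∈ U | Δ x = 0} := by
  have hlow x := degree_sum_C_mul_X_pow_sub_one_sub_lt fun i => a i x
  have hmon x : (p x).Monic := hp x ▸ monic_X_pow_add (hlow x)
  have hdeg x : (p x).natDegree = d := by
    rw [hp, natDegree_add_eq_left_of_degree_lt ((hlow x).trans_eq (degree_X_pow d).symm),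
      natDegree_X_pow]
  have hcoeff k : DifferentiableOn ℂ (fun x => (p x).coeff k) U := by
    simp only [hp, coeff_add, finsetSum_coeff, coeff_C_mul]
    exact (differentiableOn_const _).add (DifferentiableOn.fun_sum fun i _ => (ha i).mul_const _)
  subst hEdesc
  ext x
  constructor
  · rintro ⟨⟨x, z⟩, ⟨⟨hxU, hz⟩, hsing⟩, rfl⟩
    refine ⟨hxU, by_contra fun hΔx => hsing ?_⟩
    exact projRegularAt_rootLocus_of_eval_derivative_ne_zero hU hmon hdeg hcoeff hxU hz
      fun hz' => hΔx ((hΔ x hxU).2 ⟨z, hz, hz'⟩)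
  · rintro ⟨hxU, hΔx⟩
    obtain ⟨z, hz, hz'⟩ := (hΔ x hxU).1 hΔx
    refine ⟨(x, z), ⟨⟨hxU, hz⟩, fun hreg => ?_⟩, rfl⟩
    have hΔloc : Δ =ᶠ[𝓝 x] 0 := by
      filter_upwards [eventually_exists_multiple_root_of_projRegularAt hmon hdeg
        (fun i => ((hcoeff i).differentiableAt (hU.mem_nhds hxU)).continuousAt)
        (hU.mem_nhds hxU) hz hz' hreg, hU.mem_nhds hxU] with y hy hyU
      exact (hΔ y hyU).2 hy
    obtain ⟨y, hyU, hΔy⟩ := hΔne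
    exact hΔy (hΔholo.eqOn_zero_of_preconnected_of_eventuallyEq_zero hU hUc.isPreconnected hxU
      hΔloc hyU)

theorem stmt_7 (n d : ℕ) (U : Set (Fin n → ℂ)) (hU : IsOpen U) (hUc : IsConnected U)
    (U' : Set ℂ) (hU' : IsOpen U') (hU'c : IsConnected U')
    (E : Set ((Fin n → ℂ) × ℂ))
    (hEan : IsAnalyticIn (U ×ˢ U') E)
    (hEdim : PureDim E n)
    (hEprop : ProperProjOn U E)
    -- the optimal (unitary) polynomial p for E, given by holomorphic coefficients a
    (a : Fin d → (Fin n → ℂ) → ℂ) (ha : ∀ i, DifferentiableOn ℂ (a i) U)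
    (p : (Fin n → ℂ) → Polynomial ℂ)
    (hp : ∀ x, p x = Polynomial.X ^ d +
      ∑ i : Fin d, Polynomial.C (a i x) * Polynomial.X ^ (d - 1 - (i : ℕ)))
    (hEdesc : E = {q : (Fin n → ℂ) × ℂ | q.1 ∈ U ∧ Polynomial.eval q.2 (p q.1) = 0})
    -- Δ is the discriminant of p: it vanishes exactly where p has a multiple root
    (Δ : (Fin n → ℂ) → ℂ) (hΔholo : DifferentiableOn ℂ Δ U)
    (hΔ : ∀ x ∈ U, (Δ x = 0 ↔ ∃ z : ℂ,
      Polynomial.eval z (p x) = 0 ∧ Polynomial.eval z (Polynomial.derivative (p x)) = 0))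
    (hΔne : ∃ x ∈ U, Δ x ≠ 0) :
    Prod.fst '' SingProj E = {x ∈ U | Δ x = 0} :=
  stmt_7_general n d U hU hUc E a ha p hp hEdesc Δ hΔholo hΔ hΔne
end

section
/- Let W(x) = x_n^d + a₁(x') x_n^{d−1} + ⋯ + a_d(x'), r_j(x) = Σ_{i=0}^{2d−1} b_{j,i}(x') x_n^{2d−1−i} for j = 1,…,m, and r̃(x) = Σ_{i=0}^{2d−1} c_i(x') x_n^{2d−1−i} be polynomials in x_n with coefficients that are indeterminates, let H₁,…,H_m, H̃ be further indeterminates, and let P_L(y₁,…,y_m,z) be a polynomial. Then there exist polynomials W̃, W̄ and polynomials T₁,…,T_{3d} depending only on the variables a_i, b_{j,i}, c_i (not on H₁,…,H_m, H̃) such that P_L(W²H₁+r₁,…,W²H_m+r_m, W²H̃+r̃) = W̃·W² + x_n^{2d−1}T₁ + x_n^{2d−2}T₂ + ⋯ + T_{2d} and (∂P_L/∂z)(W²H₁+r₁,…,W²H_m+r_m, W²H̃+r̃) = W̄·W + x_n^{d−1}T_{2d+1} + ⋯ + T_{3d}. -/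
/-!
Modulo `W²` the arguments `W²H_j + r_j` and `W²H̃ + r̃` are congruent to `r_j` and `r̃`, which
only involve the coefficient variables. Hence `P_L(…)` is congruent modulo `W²` (and
`∂P_L/∂z(…)` modulo `W`) to a polynomial `Q` with coefficients in `ℂ[a, b, c]`. As `W` is monic
with coefficients in `ℂ[a, b, c]`, division with remainder by `W²` or `W` commutes with the
inclusion `ℂ[a, b, c] → ℂ[a, b, c, H]`, so the remainders are those of `Q` and do not involve
the `H`'s.
-/

open Polynomial

/-- Variables standing for the coefficients `a_i` of `W`, `b_{j,i}` of `r_j`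
and `c_i` of `r̃`. -/
abbrev sigABC (m d : ℕ) : Type := Fin d ⊕ ((Fin m × Fin (2 * d)) ⊕ Fin (2 * d))

/-- All variables: coefficient variables together with `H₁,…,H_m` and `H̃`. -/
abbrev sigAll (m d : ℕ) : Type := sigABC m d ⊕ (Fin m ⊕ Unit)

/-- The generic monic polynomial `W = x_n^d + a₁ x_n^{d-1} + ⋯ + a_d`. -/
noncomputable def Wgen (m d : ℕ) : Polynomial (MvPolynomial (sigAll m d) ℂ) :=
  X ^ d + ∑ i : Fin d,
    C (MvPolynomial.X (Sum.inl (Sum.inl i))) * X ^ (d - 1 - (i : ℕ))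

/-- The generic polynomial `r_j = Σ b_{j,i} x_n^{2d-1-i}`. -/
noncomputable def rgen (m d : ℕ) (j : Fin m) : Polynomial (MvPolynomial (sigAll m d) ℂ) :=
  ∑ i : Fin (2 * d),
    C (MvPolynomial.X (Sum.inl (Sum.inr (Sum.inl (j, i))))) * X ^ (2 * d - 1 - (i : ℕ))

/-- The generic polynomial `r̃ = Σ c_i x_n^{2d-1-i}`. -/
noncomputable def rtgen (m d : ℕ) : Polynomial (MvPolynomial (sigAll m d) ℂ) :=
  ∑ i : Fin (2 * d),
    C (MvPolynomial.X (Sum.inl (Sum.inr (Sum.inr i)))) * X ^ (2 * d - 1 - (i : ℕ))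

/-- The indeterminate `H_j`. -/
noncomputable def Hgen (m d : ℕ) (j : Fin m) : MvPolynomial (sigAll m d) ℂ :=
  MvPolynomial.X (Sum.inr (Sum.inl j))

/-- The indeterminate `H̃`. -/
noncomputable def Htgen (m d : ℕ) : MvPolynomial (sigAll m d) ℂ :=
  MvPolynomial.X (Sum.inr (Sum.inr ()))

/-- Substitution `y_j ↦ W²H_j + r_j` turning a polynomial in `y₁,…,y_m` into a polynomial
in `x_n` over the ring of all the indeterminates. -/
noncomputable def substHom (m d : ℕ) :
    MvPolynomial (Fin m) ℂ →+* Polynomial (MvPolynomial (sigAll m d) ℂ) :=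
  MvPolynomial.eval₂Hom
    ((Polynomial.C : MvPolynomial (sigAll m d) ℂ →+* Polynomial (MvPolynomial (sigAll m d) ℂ)).comp
      (MvPolynomial.C : ℂ →+* MvPolynomial (sigAll m d) ℂ))
    (fun j => (Wgen m d) ^ 2 * C (Hgen m d j) + rgen m d j)


namespace Polynomial

variable {R S : Type*}

noncomputable def ofCoeffsDesc [Semiring R] {n : ℕ} (b : Fin n → R) : R[X] :=
  ∑ i : Fin n, C (b i) * X ^ (n - 1 - (i : ℕ))

lemma map_ofCoeffsDesc [Semiring R] [Semiring S] (f : R →+* S) {n : ℕ} (b : Fin n → R) :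
    (ofCoeffsDesc b).map f = ofCoeffsDesc (f ∘ b) := by
  simp [ofCoeffsDesc, Polynomial.map_sum]

lemma degree_ofCoeffsDesc_lt [Semiring R] {n : ℕ} (b : Fin n → R) :
    (ofCoeffsDesc b).degree < n := by
  refine (degree_sum_le _ _).trans_lt ((Finset.sup_lt_iff (WithBot.bot_lt_coe n)).2 ?_)
  intro i _
  exact (degree_C_mul_X_pow_le _ _).trans_lt
    (WithBot.coe_lt_coe.2 (by omega : n - 1 - (i : ℕ) < n))

lemma monic_X_pow_add_ofCoeffsDesc [Semiring R] {n : ℕ} (b : Fin n → R) :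
    (X ^ n + ofCoeffsDesc b).Monic :=
  monic_X_pow_add (degree_ofCoeffsDesc_lt b)

lemma natDegree_X_pow_add_ofCoeffsDesc [Semiring R] [Nontrivial R] {n : ℕ} (b : Fin n → R) :
    (X ^ n + ofCoeffsDesc b).natDegree = n := by
  rw [natDegree_add_eq_left_of_degree_lt (by simpa using degree_ofCoeffsDesc_lt b),
    natDegree_X_pow]

lemma eq_ofCoeffsDesc_of_degree_lt [Semiring R] {p : R[X]} {n : ℕ} (hp : p.degree < n) :
    p = ofCoeffsDesc (fun i : Fin n => p.coeff (n - 1 - i)) := by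
  rcases eq_or_ne p 0 with rfl | hp0
  · simp [ofCoeffsDesc]
  rw [ofCoeffsDesc,
    Fin.sum_univ_eq_sum_range (fun i => C (p.coeff (n - 1 - i)) * X ^ (n - 1 - i)),
    Finset.sum_range_reflect (fun i => C (p.coeff i) * X ^ i) n]
  simp_rw [C_mul_X_pow_eq_monomial]
  exact as_sum_range' p n ((natDegree_lt_iff_degree_lt hp0).2 hp)

lemma eq_divByMonic_mul_add_ofCoeffsDesc [CommRing R] [Nontrivial R] {M : R[X]} (hM : M.Monic)
    {n : ℕ} (hn : M.natDegree = n) (p : R[X]) :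
    p = (p /ₘ M) * M + ofCoeffsDesc (fun i : Fin n => (p %ₘ M).coeff (n - 1 - i)) := by
  have hdeg : (p %ₘ M).degree < n := by
    simpa [degree_eq_natDegree hM.ne_zero, hn] using degree_modByMonic_lt p hM
  rw [← eq_ofCoeffsDesc_of_degree_lt hdeg, mul_comm, add_comm, modByMonic_add_div p M]

end Polynomial

section Congruence

variable {R S : Type*} [CommSemiring R] [CommRing S] {w : S}

lemma Ideal.Quotient.mk_span_singleton_eq_iff {a b : S} :
    Ideal.Quotient.mk (Ideal.span {w}) a = Ideal.Quotient.mk (Ideal.span {w}) b ↔ w ∣ a - b := by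
  rw [Ideal.Quotient.mk_eq_mk_iff_sub_mem, Ideal.mem_span_singleton]

lemma MvPolynomial.dvd_eval₂_sub_eval₂ {σ : Type*} (f : R →+* S) {x y : σ → S}
    (hxy : ∀ i, w ∣ x i - y i) (p : MvPolynomial σ R) :
    w ∣ p.eval₂ f x - p.eval₂ f y := by
  rw [← Ideal.Quotient.mk_span_singleton_eq_iff, MvPolynomial.eval₂_comp_left,
    MvPolynomial.eval₂_comp_left]
  congr 1
  funext i
  exact Ideal.Quotient.mk_span_singleton_eq_iff.2 (hxy i)

lemma Polynomial.dvd_eval₂_sub_eval₂ {f g : R →+* S} {x y : S} (hfg : ∀ a, w ∣ f a - g a)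
    (hxy : w ∣ x - y) (p : R[X]) :
    w ∣ p.eval₂ f x - p.eval₂ g y := by
  rw [← Ideal.Quotient.mk_span_singleton_eq_iff, Polynomial.hom_eval₂, Polynomial.hom_eval₂]
  congr 1
  · ext a
    exact Ideal.Quotient.mk_span_singleton_eq_iff.2 (hfg a)
  · exact Ideal.Quotient.mk_span_singleton_eq_iff.2 hxy

end Congruence

noncomputable def inclABC (m d : ℕ) :
    MvPolynomial (sigABC m d) ℂ →+* MvPolynomial (sigAll m d) ℂ :=
  (MvPolynomial.rename Sum.inl).toRingHom

@[simp]
lemma inclABC_X (m d : ℕ) (v : sigABC m d) :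
    inclABC m d (MvPolynomial.X v) = MvPolynomial.X (Sum.inl v) :=
  MvPolynomial.rename_X _ _

noncomputable def Wabc (m d : ℕ) : (MvPolynomial (sigABC m d) ℂ)[X] :=
  X ^ d + ofCoeffsDesc fun i => MvPolynomial.X (Sum.inl i)

noncomputable def rabc (m d : ℕ) (j : Fin m) : (MvPolynomial (sigABC m d) ℂ)[X] :=
  ofCoeffsDesc fun i => MvPolynomial.X (Sum.inr (Sum.inl (j, i)))

noncomputable def rtabc (m d : ℕ) : (MvPolynomial (sigABC m d) ℂ)[X] :=
  ofCoeffsDesc fun i => MvPolynomial.X (Sum.inr (Sum.inr i))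

noncomputable def substABC (m d : ℕ) :
    MvPolynomial (Fin m) ℂ →+* (MvPolynomial (sigABC m d) ℂ)[X] :=
  MvPolynomial.eval₂Hom (C.comp MvPolynomial.C) (rabc m d)

lemma map_Wabc (m d : ℕ) : (Wabc m d).map (inclABC m d) = Wgen m d := by
  rw [Wabc, Polynomial.map_add, Polynomial.map_pow, map_X, map_ofCoeffsDesc]
  simp only [Function.comp_def, inclABC_X]
  rfl

lemma map_rabc (m d : ℕ) (j : Fin m) : (rabc m d j).map (inclABC m d) = rgen m d j := by
  rw [rabc, map_ofCoeffsDesc]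
  simp only [Function.comp_def, inclABC_X]
  rfl

lemma map_rtabc (m d : ℕ) : (rtabc m d).map (inclABC m d) = rtgen m d := by
  rw [rtabc, map_ofCoeffsDesc]
  simp only [Function.comp_def, inclABC_X]
  rfl

lemma monic_Wabc (m d : ℕ) : (Wabc m d).Monic :=
  monic_X_pow_add_ofCoeffsDesc _

lemma monic_Wgen (m d : ℕ) : (Wgen m d).Monic :=
  map_Wabc m d ▸ (monic_Wabc m d).map _

lemma natDegree_Wgen (m d : ℕ) : (Wgen m d).natDegree = d :=
  natDegree_X_pow_add_ofCoeffsDesc _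

lemma Wgen_sq_dvd_substHom_sub (m d : ℕ) (a : MvPolynomial (Fin m) ℂ) :
    Wgen m d ^ 2 ∣ substHom m d a - (substABC m d a).map (inclABC m d) := by
  have hmap : (mapRingHom (inclABC m d)).comp (substABC m d) =
      MvPolynomial.eval₂Hom (C.comp MvPolynomial.C) (rgen m d) := by
    rw [substABC, MvPolynomial.comp_eval₂Hom]
    congr 1
    · exact RingHom.ext fun c => by simp [inclABC]
    · funext j; exact map_rabc m d j
  rw [← coe_mapRingHom, ← RingHom.comp_apply, hmap, substHom]
  exact MvPolynomial.dvd_eval₂_sub_eval₂ _ (fun j => ⟨C (Hgen m d j), by ring⟩) a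

lemma Wgen_sq_dvd_eval₂_sub (m d : ℕ) (P : (MvPolynomial (Fin m) ℂ)[X]) :
    Wgen m d ^ 2 ∣ P.eval₂ (substHom m d) (Wgen m d ^ 2 * C (Htgen m d) + rtgen m d) -
      (P.eval₂ (substABC m d) (rtabc m d)).map (inclABC m d) := by
  rw [← coe_mapRingHom, hom_eval₂, coe_mapRingHom, map_rtabc]
  refine dvd_eval₂_sub_eval₂ (fun a => ?_) ⟨C (Htgen m d), by ring⟩ P
  rw [RingHom.comp_apply, coe_mapRingHom]
  exact Wgen_sq_dvd_substHom_sub m d a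

lemma eval₂_modByMonic_map_eq (m d : ℕ) {M : (MvPolynomial (sigABC m d) ℂ)[X]} (hM : M.Monic)
    (hdvd : M.map (inclABC m d) ∣ Wgen m d ^ 2) (P : (MvPolynomial (Fin m) ℂ)[X]) :
    P.eval₂ (substHom m d) (Wgen m d ^ 2 * C (Htgen m d) + rtgen m d) %ₘ M.map (inclABC m d) =
      (P.eval₂ (substABC m d) (rtabc m d) %ₘ M).map (inclABC m d) := by
  rw [map_modByMonic _ hM]
  exact modByMonic_eq_of_dvd_sub (hM.map _) (hdvd.trans (Wgen_sq_dvd_eval₂_sub m d P))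

theorem stmt_14_general (m d : ℕ) (P : Polynomial (MvPolynomial (Fin m) ℂ)) :
    ∃ (Wt Wb : Polynomial (MvPolynomial (sigAll m d) ℂ))
      (T : Fin (2 * d) → MvPolynomial (sigAll m d) ℂ)
      (T' : Fin d → MvPolynomial (sigAll m d) ℂ),
      -- T₁,…,T_{3d} depend only on the variables a_i, b_{j,i}, c_i
      (∀ i, T i ∈ Set.range
        (MvPolynomial.rename (Sum.inl : sigABC m d → sigAll m d))) ∧
      (∀ i, T' i ∈ Set.range
        (MvPolynomial.rename (Sum.inl : sigABC m d → sigAll m d))) ∧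
      -- P_L(W²H₁+r₁,…,W²H_m+r_m, W²H̃+r̃) = W̃·W² + Σ T_{i+1} x_n^{2d-1-i}
      Polynomial.eval₂ (substHom m d) ((Wgen m d) ^ 2 * C (Htgen m d) + rtgen m d) P =
        Wt * (Wgen m d) ^ 2 +
          ∑ i : Fin (2 * d), C (T i) * X ^ (2 * d - 1 - (i : ℕ)) ∧
      -- (∂P_L/∂z)(…) = W̄·W + Σ T_{2d+1+i} x_n^{d-1-i}
      Polynomial.eval₂ (substHom m d) ((Wgen m d) ^ 2 * C (Htgen m d) + rtgen m d)
          (Polynomial.derivative P) =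
        Wb * (Wgen m d) +
          ∑ i : Fin d, C (T' i) * X ^ (d - 1 - (i : ℕ)) := by
  set E := P.eval₂ (substHom m d) (Wgen m d ^ 2 * C (Htgen m d) + rtgen m d)
  set E' := (derivative P).eval₂ (substHom m d) (Wgen m d ^ 2 * C (Htgen m d) + rtgen m d)
  have hW := map_Wabc m d
  have hW2 : (Wabc m d ^ 2).map (inclABC m d) = Wgen m d ^ 2 := by rw [Polynomial.map_pow, hW]
  refine ⟨E /ₘ Wgen m d ^ 2, E' /ₘ Wgen m d,
    fun i => (E %ₘ Wgen m d ^ 2).coeff (2 * d - 1 - i),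
    fun i => (E' %ₘ Wgen m d).coeff (d - 1 - i), fun i => ?_, fun i => ?_,
    eq_divByMonic_mul_add_ofCoeffsDesc ((monic_Wgen m d).pow 2)
      (by rw [(monic_Wgen m d).natDegree_pow, natDegree_Wgen]) E,
    eq_divByMonic_mul_add_ofCoeffsDesc (monic_Wgen m d) (natDegree_Wgen m d) E'⟩
  · rw [← hW2, eval₂_modByMonic_map_eq m d ((monic_Wabc m d).pow 2) hW2.dvd]
    exact ⟨_, (coeff_map _ _).symm⟩
  · rw [← hW, eval₂_modByMonic_map_eq m d (monic_Wabc m d) (hW ▸ dvd_pow_self _ two_ne_zero)]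
    exact ⟨_, (coeff_map _ _).symm⟩

theorem stmt_14 (m d : ℕ) (hd : 0 < d)
    (P : Polynomial (MvPolynomial (Fin m) ℂ)) :
    ∃ (Wt Wb : Polynomial (MvPolynomial (sigAll m d) ℂ))
      (T : Fin (2 * d) → MvPolynomial (sigAll m d) ℂ)
      (T' : Fin d → MvPolynomial (sigAll m d) ℂ),
      -- T₁,…,T_{3d} depend only on the variables a_i, b_{j,i}, c_i
      (∀ i, T i ∈ Set.range
        (MvPolynomial.rename (Sum.inl : sigABC m d → sigAll m d))) ∧
      (∀ i, T' i ∈ Set.range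
        (MvPolynomial.rename (Sum.inl : sigABC m d → sigAll m d))) ∧
      -- P_L(W²H₁+r₁,…,W²H_m+r_m, W²H̃+r̃) = W̃·W² + Σ T_{i+1} x_n^{2d-1-i}
      Polynomial.eval₂ (substHom m d) ((Wgen m d) ^ 2 * C (Htgen m d) + rtgen m d) P =
        Wt * (Wgen m d) ^ 2 +
          ∑ i : Fin (2 * d), C (T i) * X ^ (2 * d - 1 - (i : ℕ)) ∧
      -- (∂P_L/∂z)(…) = W̄·W + Σ T_{2d+1+i} x_n^{d-1-i}
      Polynomial.eval₂ (substHom m d) ((Wgen m d) ^ 2 * C (Htgen m d) + rtgen m d)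
          (Polynomial.derivative P) =
        Wb * (Wgen m d) +
          ∑ i : Fin d, C (T' i) * X ^ (d - 1 - (i : ℕ)) :=
  stmt_14_general m d P
end
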